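/- arXiv:1307.7915 — 3 statements merged into one kernel-verified Lean document; each statement's English description precedes it below -/
import Mathlib

section
/- Let f be real-analytic near its simple root α and let A be a real-valued function that is real-analytic (in particular twice continuously differentiable) in a neighborhood of 1 with A(1) = 1 and A'(1) = -1/2. Define, for x near α with f'(x) ≠ 0, the iteration map F(x) = x - A(f'(y(x))/f'(x)) · f(x)/f'(x), where y(x) = x - f(x)/f'(x). Then the method is of third order; more precisely, as x → α, F(x) - α = (1/2)·[c₃ - 4 c₂² (A''(1) - 1)]·(x - α)³ + O((x - α)⁴). -/
/-!
Work with expansions modulo `(x - α) ^ n` near `α` (`EqModPow`): they are compatible with sums,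
products, quotients by functions not vanishing at `α` and composition, and Taylor's formula
produces them for analytic functions. With `e = x - α`, the Newton correction is
`f / f' ≡ e - c₂e² + 2(c₂² - c₃)e³ mod e⁴`, so `y - α ≡ c₂e² mod e³` and
`f'(y) / f'(x) ≡ 1 - 2c₂e + 3(2c₂² - c₃)e² mod e³`. The conditions `A(1) = 1`, `A'(1) = -1/2`
are exactly what make the weight `A(f'(y) / f'(x)) ≡ 1 + c₂e mod e²`, and any weight
`1 + c₂e + se²` cancels the `e` and `e²` terms of `x - α - weight · f / f'`, leaving
`-(c₂² - 2c₃ + s)e³`.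
-/

open Filter Asymptotics Topology
open scoped Nat

theorem Asymptotics.isBigO_sub_pow_of_le {𝕜 : Type*} [NormedField 𝕜] (a : 𝕜) {m n : ℕ}
    (hmn : m ≤ n) : (fun x : 𝕜 => (x - a) ^ n) =O[𝓝 a] fun x => (x - a) ^ m := by
  have hcont : Continuous fun x : 𝕜 => (x - a) ^ (n - m) := by fun_prop
  refine ((isBigO_refl (fun x => (x - a) ^ m) (𝓝 a)).mul ((hcont.tendsto a).isBigO_one 𝕜)).congr
    (fun x => ?_) fun _ => mul_one _
  rw [← pow_add, Nat.add_sub_cancel' hmn]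

def EqModPow {𝕜 : Type*} [NormedField 𝕜] (a : 𝕜) (n : ℕ) (f g : 𝕜 → 𝕜) : Prop :=
  (fun x => f x - g x) =O[𝓝 a] fun x => (x - a) ^ n

namespace EqModPow

variable {𝕜 : Type*} [NormedField 𝕜] {a b : 𝕜} {m n k : ℕ} {f g h f₁ f₂ g₁ g₂ u : 𝕜 → 𝕜}

theorem refl (a : 𝕜) (n : ℕ) (f : 𝕜 → 𝕜) : EqModPow a n f f := by
  simpa [EqModPow] using isBigO_zero _ _

theorem symm (hfg : EqModPow a n f g) : EqModPow a n g f :=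
  hfg.neg_left.congr_left fun _ => neg_sub _ _

theorem trans (hfg : EqModPow a n f g) (hgh : EqModPow a n g h) : EqModPow a n f h :=
  (IsBigO.add hfg hgh).congr_left fun _ => sub_add_sub_cancel _ _ _

theorem congr_sub {f' g' : 𝕜 → 𝕜} (hfg : EqModPow a n f g)
    (h : ∀ x, f' x - g' x = f x - g x) : EqModPow a n f' g' :=
  hfg.congr_left fun x => (h x).symm

theorem sub (h₁ : EqModPow a n f₁ g₁) (h₂ : EqModPow a n f₂ g₂) :
    EqModPow a n (fun x => f₁ x - f₂ x) (fun x => g₁ x - g₂ x) :=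
  (IsBigO.sub h₁ h₂).congr_left fun _ => by ring

theorem const_mul (hfg : EqModPow a n f g) (c : 𝕜) :
    EqModPow a n (fun x => c * f x) (fun x => c * g x) :=
  (hfg.const_mul_left c).congr_left fun _ => by ring

theorem mono (hfg : EqModPow a n f g) (hmn : m ≤ n) : EqModPow a m f g :=
  IsBigO.trans hfg (isBigO_sub_pow_of_le a hmn)

theorem of_eq_pow_mul (hfg : ∀ x, f x - g x = (x - a) ^ n * h x) (hh : ContinuousAt h a) :
    EqModPow a n f g :=
  ((isBigO_refl _ _).mul (hh.tendsto.isBigO_one 𝕜)).congr (fun x => (hfg x).symm) fun _ =>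
    mul_one _

theorem zero_of_continuousAt (hg : ContinuousAt g a) : EqModPow a 0 g fun _ => 0 :=
  of_eq_pow_mul (h := g) (fun _ => by ring) hg

theorem add (h₁ : EqModPow a n f₁ g₁) (h₂ : EqModPow a n f₂ g₂) :
    EqModPow a n (fun x => f₁ x + f₂ x) (fun x => g₁ x + g₂ x) :=
  (IsBigO.add h₁ h₂).congr_left fun _ => by ring

/-- Since `g₂ = O((x - a) ^ k)`, the first factor is only needed to order `m`. -/
theorem mul (h₁ : EqModPow a m f₁ g₁) (h₂ : EqModPow a (m + k) f₂ g₂) (hg₁ : ContinuousAt g₁ a)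
    (hg₂ : EqModPow a k g₂ fun _ => 0) :
    EqModPow a (m + k) (fun x => f₁ x * f₂ x) (fun x => g₁ x * g₂ x) := by
  unfold EqModPow at h₁ h₂ hg₂ ⊢
  simp only [sub_zero] at hg₂
  have hf₁g₁ : (fun x => f₁ x - g₁ x) =O[𝓝 a] fun _ => (1 : 𝕜) :=
    h₁.trans (by simpa using isBigO_sub_pow_of_le a (Nat.zero_le m))
  have hcross := (hf₁g₁.mul h₂).add ((h₁.mul hg₂).congr_right fun _ => by ring)
  have hmain := (hg₁.tendsto.isBigO_one 𝕜).mul h₂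
  exact (hcross.add hmain).congr (fun _ => by ring) fun _ => by simp

theorem div {q : 𝕜 → 𝕜} (hfg : EqModPow a n f fun x => g x * q x) (hg : ContinuousAt g a)
    (hga : g a ≠ 0) : EqModPow a n (fun x => f x / g x) q := by
  refine (IsBigO.mul hfg ((hg.tendsto.inv₀ hga).isBigO_one 𝕜)).congr' ?_ (by simp)
  filter_upwards [hg.eventually_ne hga] with x hx
  field_simp

theorem tendsto (hu : EqModPow a k u fun _ => b) (hk : k ≠ 0) : Tendsto u (𝓝 a) (𝓝 b) := by
  have hpow : Tendsto (fun x : 𝕜 => (x - a) ^ k) (𝓝 a) (𝓝 0) := by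
    have hcont : Continuous fun x : 𝕜 => (x - a) ^ k := by fun_prop
    simpa [zero_pow hk] using hcont.tendsto a
  simpa using (IsBigO.trans_tendsto hu hpow).add_const b

theorem comp (hfg : EqModPow b n f g) (hu : EqModPow a k u fun _ => b) (hk : k ≠ 0) :
    EqModPow a (k * n) (fun x => f (u x)) (fun x => g (u x)) := by
  have hun : (fun x => (u x - b) ^ n) =O[𝓝 a] fun x => (x - a) ^ (k * n) := by
    simpa [pow_mul] using IsBigO.pow hu n
  exact (hfg.comp_tendsto (hu.tendsto hk)).trans hun

end EqModPow

theorem HasFPowerSeriesAt.factorial_smul_coeff {𝕜 E : Type*} [NontriviallyNormedField 𝕜]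
    [NormedAddCommGroup E] [NormedSpace 𝕜 E] [CompleteSpace E] {p : FormalMultilinearSeries 𝕜 𝕜 E}
    {f : 𝕜 → E} {a : 𝕜} (hf : HasFPowerSeriesAt f p a) (n : ℕ) :
    (n ! : 𝕜) • p.coeff n = iteratedDeriv n f a := by
  obtain ⟨r, hr⟩ := hf
  have := hr.factorial_smul 1 n
  rw [FormalMultilinearSeries.apply_eq_pow_smul_coeff, one_pow, one_smul] at this
  rw [iteratedDeriv_eq_iteratedFDeriv, ← this, Nat.cast_smul_eq_nsmul]

theorem AnalyticAt.eqModPow_taylor {𝕜 : Type*} [NontriviallyNormedField 𝕜] [CompleteSpace 𝕜]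
    [CharZero 𝕜] {f : 𝕜 → 𝕜} {a : 𝕜} (hf : AnalyticAt 𝕜 f a) (n : ℕ) :
    EqModPow a n f fun x =>
      ∑ k ∈ Finset.range n, (k ! : 𝕜)⁻¹ * iteratedDeriv k f a * (x - a) ^ k := by
  obtain ⟨p, hp⟩ := hf
  have hshift : Tendsto (fun x => x - a) (𝓝 a) (𝓝 0) := by
    simpa using (tendsto_id (x := 𝓝 a)).sub_const a
  have hrem := (hp.isBigO_sub_partialSum_pow n).comp_tendsto hshift
  refine isBigO_norm_right.mp (hrem.congr (fun x => ?_) fun x => by simp [norm_pow])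
  simp only [Function.comp_apply, add_sub_cancel, FormalMultilinearSeries.partialSum,
    FormalMultilinearSeries.apply_eq_pow_smul_coeff, ← hp.factorial_smul_coeff, smul_eq_mul]
  congr 1
  refine Finset.sum_congr rfl fun k _ => ?_
  have : (k ! : 𝕜) ≠ 0 := Nat.cast_ne_zero.mpr k.factorial_ne_zero
  field_simp

section NormalizedTaylorCoeff

variable {𝕜 : Type*} [NontriviallyNormedField 𝕜] {f : 𝕜 → 𝕜} {α : 𝕜}

noncomputable def normalizedTaylorCoeff (f : 𝕜 → 𝕜) (α : 𝕜) (h : ℕ) : 𝕜 :=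
  iteratedDeriv h f α / ((h ! : 𝕜) * deriv f α)

theorem normalizedTaylorCoeff_zero (hroot : f α = 0) : normalizedTaylorCoeff f α 0 = 0 := by
  simp [normalizedTaylorCoeff, hroot]

theorem normalizedTaylorCoeff_one (hder : deriv f α ≠ 0) : normalizedTaylorCoeff f α 1 = 1 := by
  simp [normalizedTaylorCoeff, hder]

theorem factorial_mul_deriv_mul_normalizedTaylorCoeff [CharZero 𝕜] (hder : deriv f α ≠ 0)
    (h : ℕ) : (h ! : 𝕜) * deriv f α * normalizedTaylorCoeff f α h = iteratedDeriv h f α := by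
  have : (h ! : 𝕜) ≠ 0 := Nat.cast_ne_zero.mpr h.factorial_ne_zero
  rw [normalizedTaylorCoeff]
  field_simp

variable [CompleteSpace 𝕜] [CharZero 𝕜]

theorem AnalyticAt.eqModPow_normalizedTaylor (hf : AnalyticAt 𝕜 f α) (hder : deriv f α ≠ 0)
    (n : ℕ) : EqModPow α n f fun x =>
      deriv f α * ∑ k ∈ Finset.range n, normalizedTaylorCoeff f α k * (x - α) ^ k := by
  refine (hf.eqModPow_taylor n).congr_sub fun x => ?_
  rw [Finset.mul_sum]
  congr 1
  refine Finset.sum_congr rfl fun k _ => ?_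
  have : (k ! : 𝕜) ≠ 0 := Nat.cast_ne_zero.mpr k.factorial_ne_zero
  rw [← factorial_mul_deriv_mul_normalizedTaylorCoeff hder]
  field_simp

theorem AnalyticAt.eqModPow_deriv_normalizedTaylor (hf : AnalyticAt 𝕜 f α)
    (hder : deriv f α ≠ 0) (n : ℕ) : EqModPow α n (deriv f) fun x =>
      deriv f α * ∑ k ∈ Finset.range n,
        (k + 1) * normalizedTaylorCoeff f α (k + 1) * (x - α) ^ k := by
  refine (hf.deriv.eqModPow_taylor n).congr_sub fun x => ?_
  rw [Finset.mul_sum]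
  congr 1
  refine Finset.sum_congr rfl fun k _ => ?_
  have : (k ! : 𝕜) ≠ 0 := Nat.cast_ne_zero.mpr k.factorial_ne_zero
  rw [← iteratedDeriv_succ', ← factorial_mul_deriv_mul_normalizedTaylorCoeff hder,
    Nat.factorial_succ]
  push_cast
  field_simp

end NormalizedTaylorCoeff

theorem AnalyticAt.eqModPow_comp_quadratic {𝕜 : Type*} [NontriviallyNormedField 𝕜]
    [CompleteSpace 𝕜] [CharZero 𝕜] {A r : 𝕜 → 𝕜} {a b p q : 𝕜} (hA : AnalyticAt 𝕜 A b)
    (hr : EqModPow a 3 r fun x => b + p * (x - a) + q * (x - a) ^ 2) :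
    EqModPow a 3 (fun x => A (r x)) fun x => A b + deriv A b * (p * (x - a) + q * (x - a) ^ 2) +
      iteratedDeriv 2 A b / 2 * p ^ 2 * (x - a) ^ 2 := by
  have hA₃ : EqModPow b 3 A fun s =>
      A b + deriv A b * (s - b) + iteratedDeriv 2 A b / 2 * (s - b) ^ 2 :=
    (hA.eqModPow_taylor 3).congr_sub fun s => by
      simp only [Finset.sum_range_succ, Finset.sum_range_zero, iteratedDeriv_zero,
        iteratedDeriv_one, Nat.factorial_zero, Nat.factorial_one, Nat.factorial_two,
        Nat.cast_one, Nat.cast_ofNat, inv_one]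
      ring
  have hrb : EqModPow a 1 r fun _ => b :=
    (hr.mono (by norm_num)).trans
      (.of_eq_pow_mul (h := fun x => p + q * (x - a)) (fun x => by ring) (by fun_prop))
  have hr' : EqModPow a 3 (fun x => r x - b) fun x => p * (x - a) + q * (x - a) ^ 2 :=
    hr.congr_sub fun x => by ring
  have hsq : EqModPow a (2 + 1) (fun x => (r x - b) * (r x - b))
      fun x => (p * (x - a) + q * (x - a) ^ 2) * (p * (x - a) + q * (x - a) ^ 2) :=
    (hr'.mono (by norm_num)).mul hr' (by fun_prop)
      (.of_eq_pow_mul (h := fun x => p + q * (x - a)) (fun x => by ring) (by fun_prop))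
  have hlin : EqModPow a 3
      (fun x => A b + deriv A b * (r x - b) + iteratedDeriv 2 A b / 2 * (r x - b) ^ 2)
      fun x => A b + deriv A b * (p * (x - a) + q * (x - a) ^ 2) +
        iteratedDeriv 2 A b / 2 * (p * (x - a) + q * (x - a) ^ 2) ^ 2 :=
    (EqModPow.add (hr'.const_mul (deriv A b)) (hsq.const_mul (iteratedDeriv 2 A b / 2))).congr_sub
      fun x => by ring
  exact (hA₃.comp hrb one_ne_zero).trans (hlin.trans
    (.of_eq_pow_mul (h := fun x => iteratedDeriv 2 A b / 2 * (2 * p * q + q ^ 2 * (x - a)))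
      (fun x => by ring) (by fun_prop)))

section NewtonStep

variable {𝕜 : Type*} [NontriviallyNormedField 𝕜] [CompleteSpace 𝕜] [CharZero 𝕜]
  {f : 𝕜 → 𝕜} {α : 𝕜}

local notation "c₂" => normalizedTaylorCoeff f α 2
local notation "c₃" => normalizedTaylorCoeff f α 3

theorem AnalyticAt.eqModPow_four_of_simpleRoot (hf : AnalyticAt 𝕜 f α) (hroot : f α = 0)
    (hder : deriv f α ≠ 0) : EqModPow α 4 f fun x =>
      deriv f α * ((x - α) + c₂ * (x - α) ^ 2 + c₃ * (x - α) ^ 3) :=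
  (hf.eqModPow_normalizedTaylor hder 4).congr_sub fun x => by
    simp only [Finset.sum_range_succ, Finset.sum_range_zero, normalizedTaylorCoeff_zero hroot,
      normalizedTaylorCoeff_one hder]
    ring

theorem AnalyticAt.eqModPow_deriv_three_of_simpleRoot (hf : AnalyticAt 𝕜 f α)
    (hder : deriv f α ≠ 0) : EqModPow α 3 (deriv f) fun x =>
      deriv f α * (1 + 2 * c₂ * (x - α) + 3 * c₃ * (x - α) ^ 2) :=
  (hf.eqModPow_deriv_normalizedTaylor hder 3).congr_sub fun x => by
    simp only [Finset.sum_range_succ, Finset.sum_range_zero, normalizedTaylorCoeff_one hder]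
    push_cast
    ring

theorem AnalyticAt.eqModPow_div_deriv (hf : AnalyticAt 𝕜 f α) (hroot : f α = 0)
    (hder : deriv f α ≠ 0) : EqModPow α 4 (fun x => f x / deriv f x) fun x =>
      (x - α) - c₂ * (x - α) ^ 2 + 2 * (c₂ ^ 2 - c₃) * (x - α) ^ 3 := by
  have hpoly : EqModPow α 4
      (fun x => deriv f α * ((x - α) + c₂ * (x - α) ^ 2 + c₃ * (x - α) ^ 3))
      (fun x => deriv f α * (1 + 2 * c₂ * (x - α) + 3 * c₃ * (x - α) ^ 2) *
        ((x - α) - c₂ * (x - α) ^ 2 + 2 * (c₂ ^ 2 - c₃) * (x - α) ^ 3)) :=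
    .of_eq_pow_mul (h := fun x => deriv f α * ((7 * c₂ * c₃ - 4 * c₂ ^ 3) +
      (6 * c₃ ^ 2 - 6 * c₂ ^ 2 * c₃) * (x - α))) (fun x => by ring) (by fun_prop)
  have hcorr : EqModPow α 1
      (fun x => (x - α) - c₂ * (x - α) ^ 2 + 2 * (c₂ ^ 2 - c₃) * (x - α) ^ 3) fun _ => 0 :=
    .of_eq_pow_mul (h := fun x => 1 - c₂ * (x - α) + 2 * (c₂ ^ 2 - c₃) * (x - α) ^ 2)
      (fun x => by ring) (by fun_prop)
  refine EqModPow.div ?_ hf.deriv.continuousAt hder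
  exact (hf.eqModPow_four_of_simpleRoot hroot hder).trans (hpoly.trans
    ((hf.eqModPow_deriv_three_of_simpleRoot hder).mul (.refl _ _ _) (by fun_prop) hcorr).symm)

theorem AnalyticAt.eqModPow_newtonStep (hf : AnalyticAt 𝕜 f α) (hroot : f α = 0)
    (hder : deriv f α ≠ 0) : EqModPow α 4 (fun x => x - f x / deriv f x) fun x =>
      α + c₂ * (x - α) ^ 2 + 2 * (c₃ - c₂ ^ 2) * (x - α) ^ 3 :=
  (hf.eqModPow_div_deriv hroot hder).symm.congr_sub fun x => by ring

theorem AnalyticAt.eqModPow_deriv_comp_newtonStep (hf : AnalyticAt 𝕜 f α) (hroot : f α = 0)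
    (hder : deriv f α ≠ 0) : EqModPow α 4 (fun x => deriv f (x - f x / deriv f x)) fun x =>
      deriv f α * (1 + 2 * c₂ ^ 2 * (x - α) ^ 2 + 4 * c₂ * (c₃ - c₂ ^ 2) * (x - α) ^ 3) := by
  have hy := hf.eqModPow_newtonStep hroot hder
  have hyα : EqModPow α 2 (fun x => x - f x / deriv f x) fun _ => α :=
    (hy.mono (by norm_num)).trans
      (.of_eq_pow_mul (h := fun x => c₂ + 2 * (c₃ - c₂ ^ 2) * (x - α)) (fun x => by ring)
        (by fun_prop))
  have hf'₂ : EqModPow α 2 (deriv f) fun z => deriv f α * (1 + 2 * c₂ * (z - α)) :=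
    ((hf.eqModPow_deriv_three_of_simpleRoot hder).mono (by norm_num)).trans
      (.of_eq_pow_mul (h := fun _ => deriv f α * (3 * c₃)) (fun x => by ring) (by fun_prop))
  exact (hf'₂.comp hyα two_ne_zero).trans
    ((hy.const_mul (2 * deriv f α * c₂)).congr_sub fun x => by ring)

theorem AnalyticAt.eqModPow_deriv_comp_newtonStep_div_deriv (hf : AnalyticAt 𝕜 f α)
    (hroot : f α = 0) (hder : deriv f α ≠ 0) :
    EqModPow α 3 (fun x => deriv f (x - f x / deriv f x) / deriv f x) fun x =>
      1 - 2 * c₂ * (x - α) + 3 * (2 * c₂ ^ 2 - c₃) * (x - α) ^ 2 := by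
  have hpoly : EqModPow α 3
      (fun x => deriv f α * (1 + 2 * c₂ ^ 2 * (x - α) ^ 2 + 4 * c₂ * (c₃ - c₂ ^ 2) * (x - α) ^ 3))
      (fun x => deriv f α * (1 + 2 * c₂ * (x - α) + 3 * c₃ * (x - α) ^ 2) *
        (1 - 2 * c₂ * (x - α) + 3 * (2 * c₂ ^ 2 - c₃) * (x - α) ^ 2)) :=
    .of_eq_pow_mul (h := fun x => deriv f α * ((16 * c₂ * c₃ - 16 * c₂ ^ 3) +
      (9 * c₃ ^ 2 - 18 * c₂ ^ 2 * c₃) * (x - α))) (fun x => by ring) (by fun_prop)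
  refine EqModPow.div ?_ hf.deriv.continuousAt hder
  exact ((hf.eqModPow_deriv_comp_newtonStep hroot hder).mono (by norm_num)).trans (hpoly.trans
    ((hf.eqModPow_deriv_three_of_simpleRoot hder).mul (.refl _ _ _) (by fun_prop)
      (.zero_of_continuousAt (by fun_prop))).symm)

theorem AnalyticAt.eqModPow_weightedNewton (hf : AnalyticAt 𝕜 f α) (hroot : f α = 0)
    (hder : deriv f α ≠ 0) {W : 𝕜 → 𝕜} {s : 𝕜}
    (hW : EqModPow α 3 W fun x => 1 + c₂ * (x - α) + s * (x - α) ^ 2) :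
    EqModPow α 4 (fun x => x - W x * (f x / deriv f x)) fun x =>
      α - (c₂ ^ 2 - 2 * c₃ + s) * (x - α) ^ 3 := by
  have hcorr : EqModPow α 1
      (fun x => (x - α) - c₂ * (x - α) ^ 2 + 2 * (c₂ ^ 2 - c₃) * (x - α) ^ 3) fun _ => 0 :=
    .of_eq_pow_mul (h := fun x => 1 - c₂ * (x - α) + 2 * (c₂ ^ 2 - c₃) * (x - α) ^ 2)
      (fun x => by ring) (by fun_prop)
  have hpoly : EqModPow α (3 + 1)
      (fun x => (1 + c₂ * (x - α) + s * (x - α) ^ 2) *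
        ((x - α) - c₂ * (x - α) ^ 2 + 2 * (c₂ ^ 2 - c₃) * (x - α) ^ 3))
      fun x => (x - α) + (c₂ ^ 2 - 2 * c₃ + s) * (x - α) ^ 3 :=
    .of_eq_pow_mul (h := fun x => 2 * c₂ * (c₂ ^ 2 - c₃) - c₂ * s + 2 * s * (c₂ ^ 2 - c₃) * (x - α))
      (fun x => by ring) (by fun_prop)
  exact ((EqModPow.refl α 4 fun x => x).sub ((hW.mul (hf.eqModPow_div_deriv hroot hder)
    (by fun_prop) hcorr).trans hpoly)).congr_sub fun x => by ring

theorem AnalyticAt.eqModPow_comp_newtonStep_div_deriv (hf : AnalyticAt 𝕜 f α) (hroot : f α = 0)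
    (hder : deriv f α ≠ 0) {A : 𝕜 → 𝕜} (hA : AnalyticAt 𝕜 A 1) (hA1 : A 1 = 1)
    (hA1' : deriv A 1 = -(1 / 2)) :
    EqModPow α 3 (fun x => A (deriv f (x - f x / deriv f x) / deriv f x)) fun x =>
      1 + c₂ * (x - α) + (3 * c₃ / 2 + (2 * iteratedDeriv 2 A 1 - 3) * c₂ ^ 2) * (x - α) ^ 2 := by
  have hr : EqModPow α 3 (fun x => deriv f (x - f x / deriv f x) / deriv f x) fun x =>
      1 + -2 * c₂ * (x - α) + 3 * (2 * c₂ ^ 2 - c₃) * (x - α) ^ 2 :=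
    (hf.eqModPow_deriv_comp_newtonStep_div_deriv hroot hder).congr_sub fun x => by ring
  exact (hA.eqModPow_comp_quadratic hr).congr_sub fun x => by rw [hA1, hA1']; ring

end NewtonStep

/-- The weighted Newton method `F(x) = x - A(f'(y)/f'(x))·f(x)/f'(x)` with
`y(x) = x - f(x)/f'(x)`, where `A` is analytic at `1` with `A(1) = 1` and
`A'(1) = -1/2`, is of third order:
`F(x) - α = (1/2)·(c₃ - 4c₂²(A''(1) - 1))·(x - α)³ + O((x - α)⁴)` as `x → α`. -/
theorem third_order_weighted_newton
    (f A : ℝ → ℝ) (α : ℝ)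
    (hf : AnalyticAt ℝ f α) (hroot : f α = 0) (hder : deriv f α ≠ 0)
    (hA : AnalyticAt ℝ A 1) (hA1 : A 1 = 1) (hA1' : deriv A 1 = -(1/2)) :
    let c₂ := iteratedDeriv 2 f α / ((Nat.factorial 2 : ℝ) * deriv f α)
    let c₃ := iteratedDeriv 3 f α / ((Nat.factorial 3 : ℝ) * deriv f α)
    let y : ℝ → ℝ := fun x => x - f x / deriv f x
    let F : ℝ → ℝ := fun x => x - A (deriv f (y x) / deriv f x) * (f x / deriv f x)
    (fun x => F x - α - (1/2) * (c₃ - 4 * c₂^2 * (iteratedDeriv 2 A 1 - 1)) * (x - α)^3)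
      =O[nhds α] (fun x => (x - α)^4) := by
  intro c₂ c₃ y F
  have hF : EqModPow α 4 F fun x =>
      α - (c₂ ^ 2 - 2 * c₃ + (3 * c₃ / 2 + (2 * iteratedDeriv 2 A 1 - 3) * c₂ ^ 2)) * (x - α) ^ 3 :=
    hf.eqModPow_weightedNewton hroot hder
      (hf.eqModPow_comp_newtonStep_div_deriv hroot hder hA hA1 hA1')
  exact hF.congr_sub fun x => by ring
end

section
/- Let f be real-analytic near its simple root α. Define Weerakoon's iteration map F(x) = x - 2 f(x)/(f'(x) + f'(y(x))), where y(x) = x - f(x)/f'(x), for x near α (so that f'(x) ≠ 0 and f'(x) + f'(y(x)) ≠ 0). Then as x → α, F(x) - α = (c₂² + c₃/2)·(x - α)³ + O((x - α)⁴); in particular Weerakoon's method is of third order and is the instance of the weighted Newton method x ↦ x - A(f'(y)/f'(x)) f(x)/f'(x) with weight A(t) = 2/(1+t). -/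
/-!
Write `e = x - α`, `b = f'(α)` and `c h = f⁽ʰ⁾(α) / (h! b)`. Taylor expansion gives
`f = b (e + c 2 e² + c 3 e³) + O(e⁴)` and `f' = b (1 + 2 c 2 e + 3 c 3 e²) + O(e³)`, so the
Newton step satisfies `y - α = c 2 e² + O(e³)` and hence `f'(y) = b (1 + 2 (c 2)² e²) + O(e³)`.
With `D = f'(x) + f'(y) = 2b + O(e)` one has `F - α = e - 2f / D`, and in `e D - 2f` the
polynomial parts cancel up to the single term `b (c 3 + 2 (c 2)²) e³`; dividing by `D` gives
the error constant `(c 2)² + c 3 / 2`.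
-/

open Filter Asymptotics Topology Finset

lemma tendsto_sub_self_nhds_zero {G : Type*} [AddGroup G] [TopologicalSpace G]
    [IsTopologicalAddGroup G] (a : G) : Tendsto (fun x => x - a) (𝓝 a) (𝓝 0) :=
  tendsto_sub_nhds_zero_iff.2 tendsto_id

section PowerAsymptotics

variable {ι : Type*} {l : Filter ι} {u : ι → ℝ}

lemma isBigO_pow_pow_of_le (hu : Tendsto u l (𝓝 0)) {m n : ℕ} (h : n ≤ m) :
    (fun x => u x ^ m) =O[l] fun x => u x ^ n := by
  rcases h.eq_or_lt with rfl | h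
  · exact isBigO_refl _ _
  · exact ((isLittleO_pow_pow h).comp_tendsto hu).isBigO

lemma Asymptotics.IsBigO.pow_mul {g : ι → ℝ} {n : ℕ} (h : g =O[l] fun x => u x ^ n) (k : ℕ) :
    (fun x => u x ^ k * g x) =O[l] fun x => u x ^ (k + n) :=
  ((isBigO_refl _ _).mul h).congr_right fun _ => (pow_add _ _ _).symm

lemma isBigO_sub_div_sub_pow {v N D : ι → ℝ} {a d : ℝ} {k : ℕ} (hd : d ≠ 0)
    (hu : Tendsto u l (𝓝 0))
    (hN : (fun x => v x * D x - N x - a * u x ^ k) =O[l] fun x => u x ^ (k + 1))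
    (hD : (fun x => D x - d) =O[l] u) :
    (fun x => v x - N x / D x - a / d * u x ^ k) =O[l] fun x => u x ^ (k + 1) := by
  have hDd : Tendsto D l (𝓝 d) := tendsto_sub_nhds_zero_iff.1 (hD.trans_tendsto hu)
  have hDinv : (fun x => (D x)⁻¹) =O[l] fun _ => (1 : ℝ) := (hDd.inv₀ hd).isBigO_one ℝ
  have hnum : (fun x => v x * D x - N x - a * u x ^ k - a / d * (u x ^ k * (D x - d)))
      =O[l] fun x => u x ^ (k + 1) :=
    hN.sub (((hD.congr_right fun x => (pow_one (u x)).symm).pow_mul k).const_mul_left _)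
  refine (hnum.mul hDinv).congr' ?_ (by simp)
  filter_upwards [hDd.eventually_ne hd] with x hx
  field_simp
  ring

end PowerAsymptotics

theorem AnalyticAt.isBigO_sub_sum_iteratedDeriv {𝕜 : Type*} [NontriviallyNormedField 𝕜]
    [CompleteSpace 𝕜] [CharZero 𝕜] {g : 𝕜 → 𝕜} {α : 𝕜} (hg : AnalyticAt 𝕜 g α) (n : ℕ) :
    (fun x => g x - ∑ k ∈ range n, iteratedDeriv k g α / k.factorial * (x - α) ^ k)
      =O[𝓝 α] fun x => (x - α) ^ n := by
  have h := (hg.hasFPowerSeriesAt.isBigO_sub_partialSum_pow n).comp_tendsto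
    (tendsto_sub_self_nhds_zero α)
  simp only [Function.comp_def, add_sub_cancel, ← norm_pow, isBigO_norm_right,
    FormalMultilinearSeries.partialSum, FormalMultilinearSeries.ofScalars_apply_eq,
    smul_eq_mul] at h
  simpa only [mul_comm] using h

lemma mul_div_add_eq_div_one_add_div_mul {K : Type*} [Field K] (r a b c : K) (hb : b ≠ 0) :
    r * a / (b + c) = r / (1 + c / b) * (a / b) := by
  rw [one_add_div hb, div_div_eq_mul_div]
  field_simp

noncomputable def taylorRatio (f : ℝ → ℝ) (α : ℝ) (h : ℕ) : ℝ :=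
  iteratedDeriv h f α / ((Nat.factorial h : ℝ) * deriv f α)

noncomputable def newtonStep (f : ℝ → ℝ) (x : ℝ) : ℝ := x - f x / deriv f x

noncomputable def weerakoonStep (f : ℝ → ℝ) (x : ℝ) : ℝ :=
  x - 2 * f x / (deriv f x + deriv f (newtonStep f x))

namespace SimpleRoot

variable {f : ℝ → ℝ} {α : ℝ}

local notation "b" => deriv f α
local notation "c" => taylorRatio f α

lemma taylorRatio_zero (hroot : f α = 0) : c 0 = 0 := by
  simp [taylorRatio, hroot]

lemma taylorRatio_one (hder : b ≠ 0) : c 1 = 1 := by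
  simp [taylorRatio, hder]

lemma iteratedDeriv_div_factorial (hder : b ≠ 0) (k : ℕ) :
    iteratedDeriv k f α / k.factorial = b * c k := by
  rw [taylorRatio]
  field_simp

lemma iteratedDeriv_deriv_div_factorial (hder : b ≠ 0) (k : ℕ) :
    iteratedDeriv k (deriv f) α / k.factorial = (k + 1) * (b * c (k + 1)) := by
  rw [← iteratedDeriv_succ', taylorRatio, Nat.factorial_succ]
  push_cast
  field_simp

lemma isBigO_sub_taylor (hf : AnalyticAt ℝ f α) (hder : b ≠ 0) (n : ℕ) :
    (fun x => f x - ∑ k ∈ range n, b * c k * (x - α) ^ k) =O[𝓝 α] fun x => (x - α) ^ n := by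
  simpa only [iteratedDeriv_div_factorial hder] using hf.isBigO_sub_sum_iteratedDeriv n

lemma isBigO_deriv_sub_taylor (hf : AnalyticAt ℝ f α) (hder : b ≠ 0) (n : ℕ) :
    (fun x => deriv f x - ∑ k ∈ range n, (k + 1) * (b * c (k + 1)) * (x - α) ^ k)
      =O[𝓝 α] fun x => (x - α) ^ n := by
  simpa only [iteratedDeriv_deriv_div_factorial hder] using
    hf.deriv.isBigO_sub_sum_iteratedDeriv n

lemma isBigO_sub_quadratic (hf : AnalyticAt ℝ f α) (hroot : f α = 0) (hder : b ≠ 0) :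
    (fun x => f x - b * ((x - α) + c 2 * (x - α) ^ 2)) =O[𝓝 α] fun x => (x - α) ^ 3 :=
  (isBigO_sub_taylor hf hder 3).congr_left fun x => by
    simp only [sum_range_succ, sum_range_zero, taylorRatio_zero hroot, taylorRatio_one hder]
    ring

lemma isBigO_sub_cubic (hf : AnalyticAt ℝ f α) (hroot : f α = 0) (hder : b ≠ 0) :
    (fun x => f x - b * ((x - α) + c 2 * (x - α) ^ 2 + c 3 * (x - α) ^ 3))
      =O[𝓝 α] fun x => (x - α) ^ 4 :=
  (isBigO_sub_taylor hf hder 4).congr_left fun x => by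
    simp only [sum_range_succ, sum_range_zero, taylorRatio_zero hroot, taylorRatio_one hder]
    ring

lemma isBigO_deriv_sub_linear (hf : AnalyticAt ℝ f α) (hder : b ≠ 0) :
    (fun x => deriv f x - b * (1 + 2 * c 2 * (x - α))) =O[𝓝 α] fun x => (x - α) ^ 2 :=
  (isBigO_deriv_sub_taylor hf hder 2).congr_left fun x => by
    simp only [sum_range_succ, sum_range_zero, taylorRatio_one hder]
    push_cast
    ring

lemma isBigO_deriv_sub_quadratic (hf : AnalyticAt ℝ f α) (hder : b ≠ 0) :
    (fun x => deriv f x - b * (1 + 2 * c 2 * (x - α) + 3 * c 3 * (x - α) ^ 2))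
      =O[𝓝 α] fun x => (x - α) ^ 3 :=
  (isBigO_deriv_sub_taylor hf hder 3).congr_left fun x => by
    simp only [sum_range_succ, sum_range_zero, taylorRatio_one hder]
    push_cast
    ring

lemma isBigO_deriv_sub_deriv (hf : AnalyticAt ℝ f α) :
    (fun x => deriv f x - b) =O[𝓝 α] fun x => x - α :=
  hf.deriv.differentiableAt.hasDerivAt.isBigO_sub

lemma newtonStep_sub_isBigO (hf : AnalyticAt ℝ f α) (hroot : f α = 0) (hder : b ≠ 0) :
    (fun x => newtonStep f x - α - c 2 * (x - α) ^ 2) =O[𝓝 α] fun x => (x - α) ^ 3 := by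
  have hN : (fun x => (x - α) * deriv f x - f x - b * c 2 * (x - α) ^ 2)
      =O[𝓝 α] fun x => (x - α) ^ (2 + 1) :=
    (((isBigO_deriv_sub_linear hf hder).pow_mul 1).sub
      (isBigO_sub_quadratic hf hroot hder)).congr (fun x => by ring) (fun x => by ring)
  refine (isBigO_sub_div_sub_pow hder (tendsto_sub_self_nhds_zero α) hN
    (isBigO_deriv_sub_deriv hf)).congr (fun x => ?_) (fun x => rfl)
  rw [newtonStep, mul_div_cancel_left₀ _ hder]
  ring

lemma newtonStep_sub_isBigO_sq (hf : AnalyticAt ℝ f α) (hroot : f α = 0) (hder : b ≠ 0) :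
    (fun x => newtonStep f x - α) =O[𝓝 α] fun x => (x - α) ^ 2 :=
  (((newtonStep_sub_isBigO hf hroot hder).trans
    (isBigO_pow_pow_of_le (tendsto_sub_self_nhds_zero α) (by norm_num))).add
    ((isBigO_refl _ _).const_mul_left (c 2))).congr_left fun x => by ring

lemma tendsto_newtonStep (hf : AnalyticAt ℝ f α) (hroot : f α = 0) (hder : b ≠ 0) :
    Tendsto (newtonStep f) (𝓝 α) (𝓝 α) := by
  have hsq : Tendsto (fun x => (x - α) ^ 2) (𝓝 α) (𝓝 0) := by
    simpa using (tendsto_sub_self_nhds_zero α).pow 2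
  exact tendsto_sub_nhds_zero_iff.1 ((newtonStep_sub_isBigO_sq hf hroot hder).trans_tendsto hsq)

lemma deriv_newtonStep_sub_isBigO (hf : AnalyticAt ℝ f α) (hroot : f α = 0) (hder : b ≠ 0) :
    (fun x => deriv f (newtonStep f x) - b * (1 + 2 * c 2 ^ 2 * (x - α) ^ 2))
      =O[𝓝 α] fun x => (x - α) ^ 3 := by
  have hlin : (fun x => deriv f (newtonStep f x) - b * (1 + 2 * c 2 * (newtonStep f x - α)))
      =O[𝓝 α] fun x => (x - α) ^ 3 :=
    ((isBigO_deriv_sub_linear hf hder).comp_tendsto (tendsto_newtonStep hf hroot hder)).trans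
      ((((newtonStep_sub_isBigO_sq hf hroot hder).pow 2).congr_right
          fun x => (pow_mul _ 2 2).symm).trans
        (isBigO_pow_pow_of_le (tendsto_sub_self_nhds_zero α) (by norm_num : 3 ≤ 2 * 2)))
  exact (hlin.add ((newtonStep_sub_isBigO hf hroot hder).const_mul_left (2 * b * c 2))).congr_left
    fun x => by ring

lemma weerakoonStep_sub_isBigO (hf : AnalyticAt ℝ f α) (hroot : f α = 0) (hder : b ≠ 0) :
    (fun x => weerakoonStep f x - α - (c 2 ^ 2 + c 3 / 2) * (x - α) ^ 3)
      =O[𝓝 α] fun x => (x - α) ^ 4 := by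
  have hN : (fun x => (x - α) * (deriv f x + deriv f (newtonStep f x)) - 2 * f x
      - b * (c 3 + 2 * c 2 ^ 2) * (x - α) ^ 3) =O[𝓝 α] fun x => (x - α) ^ (3 + 1) :=
    ((((isBigO_deriv_sub_quadratic hf hder).pow_mul 1).add
      ((deriv_newtonStep_sub_isBigO hf hroot hder).pow_mul 1)).sub
      ((isBigO_sub_cubic hf hroot hder).const_mul_left 2)).congr
      (fun x => by ring) (fun x => by ring)
  have hy : (fun x => newtonStep f x - α) =O[𝓝 α] fun x => x - α :=
    ((newtonStep_sub_isBigO_sq hf hroot hder).trans (isBigO_pow_pow_of_le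
      (tendsto_sub_self_nhds_zero α) (by norm_num : 1 ≤ 2))).congr_right fun x => pow_one _
  have hD : (fun x => deriv f x + deriv f (newtonStep f x) - 2 * b) =O[𝓝 α] fun x => x - α :=
    ((isBigO_deriv_sub_deriv hf).add (((isBigO_deriv_sub_deriv hf).comp_tendsto
      (tendsto_newtonStep hf hroot hder)).trans hy)).congr_left fun x => by
        simp only [Function.comp_apply]
        ring
  refine (isBigO_sub_div_sub_pow (mul_ne_zero two_ne_zero hder) (tendsto_sub_self_nhds_zero α)
    hN hD).congr (fun x => ?_) (fun x => rfl)
  rw [weerakoonStep]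
  field_simp
  ring

end SimpleRoot

/-- Weerakoon's method `F(x) = x - 2f(x)/(f'(x) + f'(y(x)))`, `y(x) = x - f(x)/f'(x)`,
is of third order: `F(x) - α = (c₂² + c₃/2)·(x - α)³ + O((x - α)⁴)` as `x → α`;
moreover it is the weighted Newton method with weight `A(t) = 2/(1+t)`. -/
theorem third_order_weerakoon
    (f : ℝ → ℝ) (α : ℝ)
    (hf : AnalyticAt ℝ f α) (hroot : f α = 0) (hder : deriv f α ≠ 0) :
    let c₂ := iteratedDeriv 2 f α / ((Nat.factorial 2 : ℝ) * deriv f α)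
    let c₃ := iteratedDeriv 3 f α / ((Nat.factorial 3 : ℝ) * deriv f α)
    let y : ℝ → ℝ := fun x => x - f x / deriv f x
    let F : ℝ → ℝ := fun x => x - 2 * f x / (deriv f x + deriv f (y x))
    let A : ℝ → ℝ := fun t => 2 / (1 + t)
    ((fun x => F x - α - (c₂^2 + c₃/2) * (x - α)^3)
      =O[nhds α] (fun x => (x - α)^4)) ∧
    (∀ x, deriv f x ≠ 0 → deriv f x + deriv f (y x) ≠ 0 →
      F x = x - A (deriv f (y x) / deriv f x) * (f x / deriv f x)) :=
  ⟨SimpleRoot.weerakoonStep_sub_isBigO hf hroot hder, fun x hx _ =>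
    congrArg (x - ·) (mul_div_add_eq_div_one_add_div_mul _ _ _ _ hx)⟩
end

section
/- Let f be real-analytic near its simple root α. Define the iteration map F(x) = x - [2 - (7/4)·t(x) + (3/4)·t(x)²]·2 f(x)/(f'(x) + f'(y(x))), where y(x) = x - (2/3)·f(x)/f'(x) and t(x) = f'(y(x))/f'(x), for x near α (so that f'(x) ≠ 0 and f'(x) + f'(y(x)) ≠ 0). Then this two-step method, which uses only three function evaluations per iteration, is of (optimal) fourth order, and as x → α, F(x) - α = (1/9)·[-9 c₂ c₃ + c₄ + 33 c₂³]·(x - α)⁴ + O((x - α)⁵). -/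
/-!
The method commutes with translations and does not change when `f` and `f'` are multiplied by
the same nonzero constant, so it suffices to treat `α = 0` and `f'(0) = 1`, where
`f(e) = e + c₂e² + c₃e³ + c₄e⁴ + O(e⁵)` and `f'(e) = 1 + 2c₂e + 3c₃e² + 4c₄e³ + O(e⁴)`.
The iteration map is built from these by ring operations, division by functions that do not
vanish at `0` and composition with a function vanishing at `0`, all of which act on expansions
modulo `O(e⁵)` as on truncated power series. Carrying the coefficients through gives
`F(e) = (1/9)(-9c₂c₃ + c₄ + 33c₂³)e⁴ + O(e⁵)`.
-/

open Filter Asymptotics Topology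

theorem isBigO_mul_of_continuousAt {X : Type*} [TopologicalSpace X] {u S : X → ℝ} {x : X}
    (hS : ContinuousAt S x) :
    (fun e => u e * S e) =O[𝓝 x] u := by
  simpa using (isBigO_refl u (𝓝 x)).mul (hS.tendsto.isBigO_one ℝ)

def HasQuarticExpansion (h : ℝ → ℝ) (a₀ a₁ a₂ a₃ a₄ : ℝ) : Prop :=
  (fun e => h e - (a₀ + a₁ * e + a₂ * e ^ 2 + a₃ * e ^ 3 + a₄ * e ^ 4)) =O[𝓝 0] (· ^ 5)

namespace HasQuarticExpansion

variable {h g w : ℝ → ℝ} {a₀ a₁ a₂ a₃ a₄ b₀ b₁ b₂ b₃ b₄ : ℝ}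

theorem zero_iff_isBigO : HasQuarticExpansion h 0 0 0 0 0 ↔ h =O[𝓝 0] (· ^ 5) := by
  simp [HasQuarticExpansion]

theorem quartic (a₀ a₁ a₂ a₃ a₄ : ℝ) :
    HasQuarticExpansion (fun e => a₀ + a₁ * e + a₂ * e ^ 2 + a₃ * e ^ 3 + a₄ * e ^ 4)
      a₀ a₁ a₂ a₃ a₄ := by
  simp [HasQuarticExpansion, isBigO_zero]

theorem const (c : ℝ) : HasQuarticExpansion (fun _ => c) c 0 0 0 0 := by
  simpa using quartic c 0 0 0 0

theorem id : HasQuarticExpansion (fun e => e) 0 1 0 0 0 := by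
  simpa using quartic 0 1 0 0 0

theorem tendsto (hh : HasQuarticExpansion h a₀ a₁ a₂ a₃ a₄) : Tendsto h (𝓝 0) (𝓝 a₀) := by
  have hrem := hh.trans_tendsto (by simpa using (continuous_pow 5).tendsto (0 : ℝ))
  have hpoly : Tendsto (fun e : ℝ => a₀ + a₁ * e + a₂ * e ^ 2 + a₃ * e ^ 3 + a₄ * e ^ 4)
      (𝓝 0) (𝓝 a₀) := by
    simpa using (by fun_prop : Continuous
      (fun e : ℝ => a₀ + a₁ * e + a₂ * e ^ 2 + a₃ * e ^ 3 + a₄ * e ^ 4)).tendsto 0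
  simpa using hrem.add hpoly

theorem isBigO_id (hw : HasQuarticExpansion w 0 b₁ b₂ b₃ b₄) : w =O[𝓝 0] fun e => e := by
  have hpow : (fun e : ℝ => e ^ 5) =O[𝓝 0] fun e => e :=
    (isBigO_mul_of_continuousAt (S := fun e => e ^ 4) (by fun_prop)).congr_left
      fun e => by ring
  have hpoly : (fun e : ℝ => 0 + b₁ * e + b₂ * e ^ 2 + b₃ * e ^ 3 + b₄ * e ^ 4) =O[𝓝 0]
      fun e => e :=
    (isBigO_mul_of_continuousAt (S := fun e => b₁ + b₂ * e + b₃ * e ^ 2 + b₄ * e ^ 3)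
      (by fun_prop)).congr_left fun e => by ring
  simpa using IsBigO.add (IsBigO.trans hw hpow) hpoly

theorem add (hh : HasQuarticExpansion h a₀ a₁ a₂ a₃ a₄)
    (hg : HasQuarticExpansion g b₀ b₁ b₂ b₃ b₄) :
    HasQuarticExpansion (fun e => h e + g e) (a₀ + b₀) (a₁ + b₁) (a₂ + b₂) (a₃ + b₃)
      (a₄ + b₄) :=
  (IsBigO.add hh hg).congr_left fun e => by ring

theorem sub (hh : HasQuarticExpansion h a₀ a₁ a₂ a₃ a₄)
    (hg : HasQuarticExpansion g b₀ b₁ b₂ b₃ b₄) :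
    HasQuarticExpansion (fun e => h e - g e) (a₀ - b₀) (a₁ - b₁) (a₂ - b₂) (a₃ - b₃)
      (a₄ - b₄) :=
  (IsBigO.sub hh hg).congr_left fun e => by ring

theorem const_mul (c : ℝ) (hh : HasQuarticExpansion h a₀ a₁ a₂ a₃ a₄) :
    HasQuarticExpansion (fun e => c * h e) (c * a₀) (c * a₁) (c * a₂) (c * a₃) (c * a₄) :=
  (IsBigO.const_mul_left hh c).congr_left fun e => by ring

theorem mul (hh : HasQuarticExpansion h a₀ a₁ a₂ a₃ a₄)
    (hg : HasQuarticExpansion g b₀ b₁ b₂ b₃ b₄) :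
    HasQuarticExpansion (fun e => h e * g e) (a₀ * b₀) (a₀ * b₁ + a₁ * b₀)
      (a₀ * b₂ + a₁ * b₁ + a₂ * b₀) (a₀ * b₃ + a₁ * b₂ + a₂ * b₁ + a₃ * b₀)
      (a₀ * b₄ + a₁ * b₃ + a₂ * b₂ + a₃ * b₁ + a₄ * b₀) := by
  have hpoly : Tendsto (fun e : ℝ => a₀ + a₁ * e + a₂ * e ^ 2 + a₃ * e ^ 3 + a₄ * e ^ 4)
      (𝓝 0) (𝓝 a₀) := (quartic a₀ a₁ a₂ a₃ a₄).tendsto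
  have hhigh := isBigO_mul_of_continuousAt (u := fun e : ℝ => e ^ 5)
    (S := fun e => (a₁ * b₄ + a₂ * b₃ + a₃ * b₂ + a₄ * b₁) + (a₂ * b₄ + a₃ * b₃ + a₄ * b₂) * e
      + (a₃ * b₄ + a₄ * b₃) * e ^ 2 + a₄ * b₄ * e ^ 3) (x := 0) (by fun_prop)
  have hfirst := (IsBigO.mul hh (hg.tendsto.isBigO_one ℝ)).congr_right fun e => mul_one (e ^ 5)
  have hsecond := (IsBigO.mul (hpoly.isBigO_one ℝ) hg).congr_right fun e => one_mul (e ^ 5)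
  exact (IsBigO.add (IsBigO.add hfirst hsecond) hhigh).congr_left fun e => by ring

theorem div {r₀ r₁ r₂ r₃ r₄ : ℝ} (hh : HasQuarticExpansion h a₀ a₁ a₂ a₃ a₄)
    (hg : HasQuarticExpansion g b₀ b₁ b₂ b₃ b₄) (hb₀ : b₀ ≠ 0)
    (e₀ : a₀ = b₀ * r₀) (e₁ : a₁ = b₀ * r₁ + b₁ * r₀) (e₂ : a₂ = b₀ * r₂ + b₁ * r₁ + b₂ * r₀)
    (e₃ : a₃ = b₀ * r₃ + b₁ * r₂ + b₂ * r₁ + b₃ * r₀)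
    (e₄ : a₄ = b₀ * r₄ + b₁ * r₃ + b₂ * r₂ + b₃ * r₁ + b₄ * r₀) :
    HasQuarticExpansion (fun e => h e / g e) r₀ r₁ r₂ r₃ r₄ := by
  subst e₀ e₁ e₂ e₃ e₄
  have hrem : HasQuarticExpansion
      (fun e => h e - (r₀ + r₁ * e + r₂ * e ^ 2 + r₃ * e ^ 3 + r₄ * e ^ 4) * g e) 0 0 0 0 0 := by
    convert hh.sub ((quartic r₀ r₁ r₂ r₃ r₄).mul hg) using 1 <;> ring
  have hginv : (fun e => (g e)⁻¹) =O[𝓝 0] fun _ => (1 : ℝ) :=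
    (hg.tendsto.inv₀ hb₀).isBigO_one ℝ
  refine (IsBigO.mul (zero_iff_isBigO.1 hrem) hginv).congr' ?_ (by simp)
  filter_upwards [hg.tendsto.eventually_ne hb₀] with e he
  field_simp

theorem comp {D : ℝ → ℝ} (hD : HasQuarticExpansion D a₀ a₁ a₂ a₃ a₄)
    (hw : HasQuarticExpansion w 0 b₁ b₂ b₃ b₄) :
    HasQuarticExpansion (fun e => D (w e)) a₀ (a₁ * b₁) (a₁ * b₂ + a₂ * b₁ ^ 2)
      (a₁ * b₃ + 2 * a₂ * b₁ * b₂ + a₃ * b₁ ^ 3)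
      (a₁ * b₄ + a₂ * (2 * b₁ * b₃ + b₂ ^ 2) + 3 * a₃ * b₁ ^ 2 * b₂ + a₄ * b₁ ^ 4) := by
  have hrem : (fun e => D (w e) - (a₀ + a₁ * w e + a₂ * w e ^ 2 + a₃ * w e ^ 3 + a₄ * w e ^ 4))
      =O[𝓝 0] (· ^ 5) :=
    IsBigO.trans (IsBigO.comp_tendsto hD hw.tendsto) (hw.isBigO_id.pow 5)
  have hpoly : HasQuarticExpansion
      (fun e => a₀ + a₁ * w e + a₂ * w e ^ 2 + a₃ * w e ^ 3 + a₄ * w e ^ 4) a₀ (a₁ * b₁)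
      (a₁ * b₂ + a₂ * b₁ ^ 2) (a₁ * b₃ + 2 * a₂ * b₁ * b₂ + a₃ * b₁ ^ 3)
      (a₁ * b₄ + a₂ * (2 * b₁ * b₃ + b₂ ^ 2) + 3 * a₃ * b₁ ^ 2 * b₂ + a₄ * b₁ ^ 4) := by
    have hw₂ := hw.mul hw
    have hw₃ := hw₂.mul hw
    convert ((((const a₀).add (hw.const_mul a₁)).add (hw₂.const_mul a₂)).add
      (hw₃.const_mul a₃)).add ((hw₃.mul hw).const_mul a₄) using 1
    · ext e; ring
    all_goals ring
  convert (zero_iff_isBigO.2 hrem).add hpoly using 1 <;> first | (ext e; ring) | ring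

theorem of_analyticAt {x : ℝ} (hh : AnalyticAt ℝ h x) :
    HasQuarticExpansion (fun e => h (x + e)) (h x) (deriv h x) (iteratedDeriv 2 h x / 2)
      (iteratedDeriv 3 h x / 6) (iteratedDeriv 4 h x / 24) := by
  have := hh.hasFPowerSeriesAt.isBigO_sub_partialSum_pow 5
  simp only [FormalMultilinearSeries.partialSum, FormalMultilinearSeries.apply_eq_prod_smul_coeff,
    Finset.prod_const, Finset.card_univ, Fintype.card_fin, FormalMultilinearSeries.coeff_ofScalars,
    smul_eq_mul, Finset.sum_range_succ, Finset.range_one, Finset.sum_singleton, pow_zero,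
    iteratedDeriv_zero, Nat.factorial_zero, Nat.cast_one, div_one, one_mul, pow_one,
    iteratedDeriv_one, Nat.factorial_one, Nat.factorial_two, Nat.cast_ofNat,
    Real.norm_eq_abs] at this
  have habs : (fun e : ℝ => |e| ^ 5) =O[𝓝 0] (· ^ 5) := by
    simpa [← abs_pow] using (isBigO_refl (fun e : ℝ => e ^ 5) (𝓝 0)).norm_left
  refine (this.trans habs).congr_left fun e => ?_
  simp [Nat.factorial]
  ring

theorem isBigO_comp_sub (hh : HasQuarticExpansion h a₀ a₁ a₂ a₃ a₄) (x : ℝ) :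
    (fun y => h (y - x) - (a₀ + a₁ * (y - x) + a₂ * (y - x) ^ 2 + a₃ * (y - x) ^ 3
      + a₄ * (y - x) ^ 4)) =O[𝓝 x] fun y => (y - x) ^ 5 :=
  IsBigO.comp_tendsto hh (tendsto_sub_nhds_zero_iff.2 tendsto_id)

end HasQuarticExpansion

noncomputable def twoStepMap (f f' : ℝ → ℝ) (x : ℝ) : ℝ :=
  let y := x - 2 / 3 * (f x / f' x)
  let t := f' y / f' x
  x - (2 - 7 / 4 * t + 3 / 4 * t ^ 2) * (2 * f x / (f' x + f' y))

theorem twoStepMap_const_mul_comp_add (f f' : ℝ → ℝ) (x₀ : ℝ) {c : ℝ} (hc : c ≠ 0) (e : ℝ) :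
    twoStepMap (fun e => c * f (x₀ + e)) (fun e => c * f' (x₀ + e)) e
      = twoStepMap f f' (x₀ + e) - x₀ := by
  simp only [twoStepMap, mul_div_mul_left _ _ hc, ← add_sub_assoc, ← mul_add,
    mul_left_comm (2 : ℝ) c]
  ring

section Expansions

variable {g d : ℝ → ℝ} {c₂ c₃ c₄ d₄ : ℝ}

theorem hasQuarticExpansion_predictor (hg : HasQuarticExpansion g 0 1 c₂ c₃ c₄)
    (hd : HasQuarticExpansion d 1 (2 * c₂) (3 * c₃) (4 * c₄) d₄) :
    HasQuarticExpansion (fun e => e - 2 / 3 * (g e / d e)) 0 (1 / 3) (2 / 3 * c₂)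
      (4 / 3 * (c₃ - c₂ ^ 2)) (8 / 3 * c₂ ^ 3 - 14 / 3 * c₂ * c₃ + 2 * c₄) := by
  have hu : HasQuarticExpansion (fun e => g e / d e) 0 1 (-c₂) (2 * c₂ ^ 2 - 2 * c₃)
      (-4 * c₂ ^ 3 + 7 * c₂ * c₃ - 3 * c₄) :=
    hg.div hd one_ne_zero (by ring) (by ring) (by ring) (by ring) (by ring)
  convert HasQuarticExpansion.id.sub (hu.const_mul (2 / 3)) using 1 <;> ring

theorem hasQuarticExpansion_comp_predictor (hg : HasQuarticExpansion g 0 1 c₂ c₃ c₄)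
    (hd : HasQuarticExpansion d 1 (2 * c₂) (3 * c₃) (4 * c₄) d₄) :
    HasQuarticExpansion (fun e => d (e - 2 / 3 * (g e / d e))) 1 (2 / 3 * c₂)
      (4 / 3 * c₂ ^ 2 + 1 / 3 * c₃) (-8 / 3 * c₂ ^ 3 + 4 * c₂ * c₃ + 4 / 27 * c₄)
      (16 / 3 * c₂ ^ 4 - 32 / 3 * c₂ ^ 2 * c₃ + 8 / 3 * c₃ ^ 2 + 44 / 9 * c₂ * c₄
        + 1 / 81 * d₄) := by
  convert hd.comp (hasQuarticExpansion_predictor hg hd) using 1 <;> ring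

theorem hasQuarticExpansion_twoStepMap (hg : HasQuarticExpansion g 0 1 c₂ c₃ c₄)
    (hd : HasQuarticExpansion d 1 (2 * c₂) (3 * c₃) (4 * c₄) d₄) :
    HasQuarticExpansion (twoStepMap g d) 0 0 0 0 (1 / 9 * (-9 * c₂ * c₃ + c₄ + 33 * c₂ ^ 3)) := by
  have hdy := hasQuarticExpansion_comp_predictor hg hd
  have ht : HasQuarticExpansion (fun e => d (e - 2 / 3 * (g e / d e)) / d e) 1 (-4 / 3 * c₂)
      (4 * c₂ ^ 2 - 8 / 3 * c₃) (-32 / 3 * c₂ ^ 3 + 40 / 3 * c₂ * c₃ - 104 / 27 * c₄)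
      (80 / 3 * c₂ ^ 4 - 148 / 3 * c₂ ^ 2 * c₃ + 32 / 3 * c₃ ^ 2 + 484 / 27 * c₂ * c₄
        - 80 / 81 * d₄) :=
    hdy.div hd one_ne_zero (by ring) (by ring) (by ring) (by ring) (by ring)
  have hweight : HasQuarticExpansion
      (fun e => 2 - 7 / 4 * (d (e - 2 / 3 * (g e / d e)) / d e)
        + 3 / 4 * (d (e - 2 / 3 * (g e / d e)) / d e) ^ 2) 1 (1 / 3 * c₂)
      (1 / 3 * c₂ ^ 2 + 2 / 3 * c₃) (-16 / 3 * c₂ ^ 3 + 2 * c₂ * c₃ + 26 / 27 * c₄)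
      (80 / 3 * c₂ ^ 4 - 91 / 3 * c₂ ^ 2 * c₃ + 8 / 3 * c₃ ^ 2 + 29 / 9 * c₂ * c₄
        + 20 / 81 * d₄) := by
    convert ((HasQuarticExpansion.const 2).sub (ht.const_mul (7 / 4))).add
      ((ht.mul ht).const_mul (3 / 4)) using 1
    · ext e; ring
    all_goals ring
  have hstep : HasQuarticExpansion
      (fun e => 2 * g e / (d e + d (e - 2 / 3 * (g e / d e)))) 0 1 (-1 / 3 * c₂)
      (-2 / 9 * c₂ ^ 2 - 2 / 3 * c₃) (50 / 27 * c₂ ^ 3 - 5 / 9 * c₂ * c₃ - 29 / 27 * c₄) :=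
    (hg.const_mul 2).div (hd.add hdy) (by norm_num) (by ring) (by ring) (by ring) (by ring)
      (by ring)
  convert HasQuarticExpansion.id.sub (hweight.mul hstep) using 1 <;> first | rfl | ring

end Expansions

/-- The two-step method
`F(x) = x - [2 - (7/4)t + (3/4)t²]·2f(x)/(f'(x) + f'(y(x)))` with
`y(x) = x - (2/3)f(x)/f'(x)` and `t(x) = f'(y(x))/f'(x)` is of fourth order:
`F(x) - α = (1/9)·[-9c₂c₃ + c₄ + 33c₂³]·(x - α)⁴ + O((x - α)⁵)` as `x → α`. -/
theorem fourth_order_method_1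
    (f : ℝ → ℝ) (α : ℝ)
    (hf : AnalyticAt ℝ f α) (hroot : f α = 0) (hder : deriv f α ≠ 0) :
    let c₂ := iteratedDeriv 2 f α / ((Nat.factorial 2 : ℝ) * deriv f α)
    let c₃ := iteratedDeriv 3 f α / ((Nat.factorial 3 : ℝ) * deriv f α)
    let c₄ := iteratedDeriv 4 f α / ((Nat.factorial 4 : ℝ) * deriv f α)
    let y : ℝ → ℝ := fun x => x - (2/3) * (f x / deriv f x)
    let t : ℝ → ℝ := fun x => deriv f (y x) / deriv f x
    let F : ℝ → ℝ := fun x =>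
      x - (2 - (7/4) * t x + (3/4) * (t x)^2) *
            (2 * f x / (deriv f x + deriv f (y x)))
    (fun x => F x - α - (1/9) * (-9 * c₂ * c₃ + c₄ + 33 * c₂^3) * (x - α)^4)
      =O[nhds α] (fun x => (x - α)^5) := by
  intro c₂ c₃ c₄ y t F
  have hg : HasQuarticExpansion (fun e => (deriv f α)⁻¹ * f (α + e)) 0 1 c₂ c₃ c₄ := by
    convert (HasQuarticExpansion.of_analyticAt hf).const_mul (deriv f α)⁻¹ using 1 <;>
      norm_num [c₂, c₃, c₄, hroot, hder, Nat.factorial] <;> field_simp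
  have hd : HasQuarticExpansion (fun e => (deriv f α)⁻¹ * deriv f (α + e)) 1 (2 * c₂) (3 * c₃)
      (4 * c₄) ((deriv f α)⁻¹ * (iteratedDeriv 4 (deriv f) α / 24)) := by
    convert (HasQuarticExpansion.of_analyticAt hf.deriv).const_mul (deriv f α)⁻¹ using 1 <;>
      norm_num [c₂, c₃, c₄, hder, Nat.factorial, iteratedDeriv_succ'] <;> field_simp <;> ring
  refine ((hasQuarticExpansion_twoStepMap hg hd).isBigO_comp_sub α).congr_left fun x => ?_
  rw [twoStepMap_const_mul_comp_add f (deriv f) α (inv_ne_zero hder), add_sub_cancel]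
  simp only [F, t, y, twoStepMap]
  ring
end
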